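/- arXiv:1203.3875 — 3 statements merged into one kernel-verified Lean document; each statement's English description precedes it below -/
import Mathlib

section
/- Let H be a separable infinite-dimensional Hilbert space and F ∈ B(H) a bounded operator such that 1 − F*F is compact. Then there exists a compact operator K such that 1 − (F+K)*(F+K) is a finite-rank orthogonal projection. -/
/-!
Let `p` be the orthogonal projection onto `ker F`; this kernel is finite-dimensional because the
compact operator `1 - F*F` is the identity on it. The operator `a = F*F + p` is injective and
differs from `1` by a compact operator, so it is invertible by the Fredholm alternative, and it is
positive. With `s = a^(-1/2)` we get `1 - (Fs)*(Fs) = s (a - F*F) s = s p s`, which is a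
projection because `p a = p` forces `p s² p = p`. Finally `s - 1 = b (1 - a)` for some `b`, so
`K = F (s - 1)` is compact.
-/

open ContinuousLinearMap

section CompactOperator

variable {𝕜 X Y : Type*} [NontriviallyNormedField 𝕜] [NormedAddCommGroup X] [NormedSpace 𝕜 X]
  [NormedAddCommGroup Y] [NormedSpace 𝕜 Y]

lemma finiteDimensional_ker_of_isCompactOperator_one_sub_comp [CompleteSpace 𝕜] {A : X →L[𝕜] Y}
    {L : Y →L[𝕜] X} (hLA : IsCompactOperator ⇑(1 - L ∘L A)) :
    FiniteDimensional 𝕜 (LinearMap.ker (A : X →ₗ[𝕜] Y)) := by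
  set N := LinearMap.ker (A : X →ₗ[𝕜] Y)
  set C : X →ₗ[𝕜] X := ((1 - L ∘L A : X →L[𝕜] X) : X →ₗ[𝕜] X)
  have hC : ∀ x ∈ N, C x = x := fun x (hx : A x = 0) => by simp [C, hx]
  have hCN : ∀ x ∈ N, C x ∈ N := fun x hx => (hC x hx).symm ▸ hx
  have hid : ⇑(C.restrict hCN) = id := funext fun x => Subtype.ext (hC x x.2)
  exact .of_isCompactOperator_id (hid ▸ hLA.restrict hCN A.isClosed_ker)

lemma isUnit_of_injective_of_isCompactOperator_one_sub [CompleteSpace X] {T : X →L[𝕜] X}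
    (hT : IsCompactOperator ⇑(1 - T)) (hinj : Function.Injective T) : IsUnit T := by
  have hres := (hT.hasEigenvalue_or_mem_resolventSet one_ne_zero).resolve_left fun h => by
    obtain ⟨x, hx⟩ := h.exists_hasEigenvector
    exact hx.2 (hinj (by simpa using hx.apply_eq_smul))
  simpa [spectrum.mem_resolventSet_iff] using hres

end CompactOperator

lemma IsStarProjection.mul_star_mul_self_add_self {R : Type*} [NonUnitalRing R] [StarRing R]
    {f p : R} (hp : IsStarProjection p) (hfp : f * p = 0) : p * (star f * f + p) = p := by
  have hpf : p * star f = 0 := by rw [← hp.isSelfAdjoint.star_eq, ← star_mul, hfp, star_zero]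
  rw [mul_add, ← mul_assoc, hpf, zero_mul, zero_add, hp.isIdempotentElem.eq]

section CStarAlgebra

variable {A : Type*} [CStarAlgebra A] [PartialOrder A] [StarOrderedRing A]

open CFC

lemma CFC.mul_rpow_neg_one_half_mul_rpow_neg_one_half {a : A} (ha : IsStrictlyPositive a) :
    a * (a ^ (-(1 / 2) : ℝ) * a ^ (-(1 / 2) : ℝ)) = 1 := by
  nth_rw 1 [← rpow_one a]
  rw [← rpow_add ha.isUnit, ← rpow_add ha.isUnit]
  norm_num
  exact rpow_zero a

lemma CFC.one_sub_star_mul_self_mul_rpow_neg_one_half {a f p : A} (hfa : star f * f + p = a)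
    (ha : IsStrictlyPositive a) :
    1 - star (f * a ^ (-(1 / 2) : ℝ)) * (f * a ^ (-(1 / 2) : ℝ)) =
      a ^ (-(1 / 2) : ℝ) * p * a ^ (-(1 / 2) : ℝ) := by
  have hs : star (a ^ (-(1 / 2) : ℝ)) = a ^ (-(1 / 2) : ℝ) := rpow_nonneg.isSelfAdjoint
  rw [← conjugate_rpow_neg_one_half a, star_mul, hs]
  nth_rw 2 [← hfa]
  noncomm_ring

lemma IsStarProjection.conj_rpow_neg_one_half {a p : A} (hp : IsStarProjection p)
    (hpa : p * a = p) (ha : IsStrictlyPositive a) :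
    IsStarProjection (a ^ (-(1 / 2) : ℝ) * p * a ^ (-(1 / 2) : ℝ)) := by
  set s := a ^ (-(1 / 2) : ℝ)
  have hpss : p * (s * s) = p := by
    calc p * (s * s) = p * a * (s * s) := by rw [hpa]
      _ = p := by rw [mul_assoc, CFC.mul_rpow_neg_one_half_mul_rpow_neg_one_half ha, mul_one]
  refine ⟨?_, hp.isSelfAdjoint.conjugate_self rpow_nonneg.isSelfAdjoint⟩
  calc s * p * s * (s * p * s) = s * (p * (s * s)) * p * s := by noncomm_ring
    _ = s * p * s := by rw [hpss, mul_assoc s p p, hp.isIdempotentElem.eq]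

lemma CFC.exists_rpow_neg_one_half_sub_one_eq_mul_one_sub (a : A) (ha : IsStrictlyPositive a) :
    ∃ b : A, a ^ (-(1 / 2) : ℝ) - 1 = b * (1 - a) := by
  have hspec : ∀ t ∈ spectrum ℝ a, 0 < t := fun t ht => ha.spectrum_pos ht
  -- `t^(-1/2) - 1 = (1 - t) / (√t (√t + 1))` for `t > 0`
  set g : ℝ → ℝ := fun t => (√t * (√t + 1))⁻¹
  have hg : ContinuousOn g (spectrum ℝ a) := by
    refine ContinuousOn.inv₀ (by fun_prop) fun t ht => ?_
    have := Real.sqrt_pos.2 (hspec t ht)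
    positivity
  have hrpow : a ^ (-(1 / 2) : ℝ) - 1 = cfc (fun t : ℝ => t ^ (-(1 / 2) : ℝ) - 1) a := by
    rw [cfc_sub (fun t : ℝ => t ^ (-(1 / 2) : ℝ)) (fun _ => 1) a
      (continuousOn_id.rpow_const fun t ht => .inl (hspec t ht).ne'),
      cfc_const_one ℝ a, rpow_eq_cfc_real ha.nonneg]
  have hsub : 1 - a = cfc (fun t : ℝ => 1 - t) a := by
    rw [cfc_sub .., cfc_const_one ℝ a, cfc_id' ℝ a]
  refine ⟨cfc g a, ?_⟩
  rw [hrpow, hsub, ← cfc_mul ..]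
  refine cfc_congr fun t ht => ?_
  have ht := hspec t ht
  have hsqrt := Real.sqrt_pos.2 ht
  rw [Real.rpow_neg ht.le, ← Real.sqrt_eq_rpow]
  simp only [g]
  field_simp
  linear_combination -Real.mul_self_sqrt ht.le

end CStarAlgebra

section InnerProductSpace

variable {𝕜 E : Type*} [RCLike 𝕜] [NormedAddCommGroup E] [InnerProductSpace 𝕜 E]

lemma Submodule.isCompactOperator_starProjection (K : Submodule 𝕜 E) [FiniteDimensional 𝕜 K] :
    IsCompactOperator K.starProjection :=
  (isCompactOperator_of_locallyCompactSpace_rng K.subtypeL).comp_clm K.orthogonalProjectionOnto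

lemma Submodule.finiteDimensional_range_mul_starProjection_mul (K : Submodule 𝕜 E)
    [FiniteDimensional 𝕜 K] (s t : E →L[𝕜] E) :
    FiniteDimensional 𝕜 (LinearMap.range ((s * K.starProjection * t : E →L[𝕜] E) : E →ₗ[𝕜] E)) :=
  Submodule.finiteDimensional_of_le (S₂ := K.map (s : E →ₗ[𝕜] E)) <| by
    rintro _ ⟨x, rfl⟩
    exact ⟨K.starProjection (t x), K.starProjection_apply_mem _, rfl⟩

variable {G : Type*} [NormedAddCommGroup G] [InnerProductSpace 𝕜 G] [CompleteSpace E]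
  [CompleteSpace G]

lemma injective_adjoint_comp_self_add_starProjection_ker (F : E →L[𝕜] G)
    [(LinearMap.ker (F : E →ₗ[𝕜] G)).HasOrthogonalProjection] :
    Function.Injective (adjoint F ∘L F + (LinearMap.ker (F : E →ₗ[𝕜] G)).starProjection) := by
  set N := LinearMap.ker (F : E →ₗ[𝕜] G)
  refine (injective_iff_map_eq_zero _).2 fun x hx => ?_
  have hsum : ‖F x‖ ^ 2 + ‖N.orthogonalProjectionOnto x‖ ^ 2 = 0 := by
    have hx' : adjoint F (F x) + N.starProjection x = 0 := hx
    rw [apply_norm_sq_eq_inner_adjoint_left, ← N.re_inner_starProjection_eq_normSq, ← map_add,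
      ← inner_add_left]
    exact (congrArg (fun y => RCLike.re (inner 𝕜 y x)) hx').trans (by simp)
  obtain ⟨hFx, hpx⟩ := (add_eq_zero_iff_of_nonneg (sq_nonneg _) (sq_nonneg _)).1 hsum
  have hxN : x ∈ N := LinearMap.mem_ker.2 (by simpa using hFx)
  rw [← N.starProjection_eq_self_iff.2 hxN, N.starProjection_apply]
  simpa using hpx

end InnerProductSpace

theorem exists_compact_perturbation_isometry_general
    {H : Type*} [NormedAddCommGroup H] [InnerProductSpace ℂ H] [CompleteSpace H]
    (F : H →L[ℂ] H) (hF : IsCompactOperator ⇑(1 - adjoint F * F)) :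
    ∃ K : H →L[ℂ] H, IsCompactOperator ⇑K ∧
      (let P : H →L[ℂ] H := 1 - adjoint (F + K) * (F + K)
       P * P = P ∧ IsSelfAdjoint P ∧ FiniteDimensional ℂ (LinearMap.range (P : H →ₗ[ℂ] H))) := by
  set N := LinearMap.ker (F : H →ₗ[ℂ] H)
  have : FiniteDimensional ℂ N := finiteDimensional_ker_of_isCompactOperator_one_sub_comp hF
  set p := N.starProjection
  have hp : IsStarProjection p := isStarProjection_starProjection
  set a := star F * F + p with ha_def
  have hone_sub : IsCompactOperator ⇑(1 - a) := by
    rw [show 1 - a = (1 - adjoint F * F) - p by rw [ha_def, star_eq_adjoint]; abel]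
    exact hF.sub N.isCompactOperator_starProjection
  have ha : IsStrictlyPositive a :=
    (isUnit_of_injective_of_isCompactOperator_one_sub hone_sub
      (injective_adjoint_comp_self_add_starProjection_ker F)).isStrictlyPositive
      (add_nonneg (star_mul_self_nonneg F) hp.nonneg)
  obtain ⟨b, hb⟩ := CFC.exists_rpow_neg_one_half_sub_one_eq_mul_one_sub a ha
  set s := a ^ (-(1 / 2) : ℝ)
  have hproj : IsStarProjection (s * p * s) := hp.conj_rpow_neg_one_half
    (hp.mul_star_mul_self_add_self (ext fun x => N.starProjection_apply_mem x)) ha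
  refine ⟨F * (s - 1), ?_, ?_⟩
  · rw [hb, ← mul_assoc]
    exact hone_sub.clm_comp (F * b)
  · have hP : 1 - adjoint (F + F * (s - 1)) * (F + F * (s - 1)) = s * p * s := by
      rw [show F + F * (s - 1) = F * s by noncomm_ring, ← star_eq_adjoint]
      exact CFC.one_sub_star_mul_self_mul_rpow_neg_one_half rfl ha
    dsimp only
    rw [hP]
    exact ⟨hproj.isIdempotentElem, hproj.isSelfAdjoint,
      N.finiteDimensional_range_mul_starProjection_mul s s⟩

/-- If `1 - F*F` is compact, then `F` can be perturbed by a compact operator `K`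
so that `1 - (F+K)*(F+K)` is a finite-rank orthogonal projection. -/
theorem exists_compact_perturbation_isometry
    {H : Type*} [NormedAddCommGroup H] [InnerProductSpace ℂ H] [CompleteSpace H]
    [TopologicalSpace.SeparableSpace H] (hinf : ¬ FiniteDimensional ℂ H)
    (F : H →L[ℂ] H) (hF : IsCompactOperator ⇑(1 - adjoint F * F)) :
    ∃ K : H →L[ℂ] H, IsCompactOperator ⇑K ∧
      (let P : H →L[ℂ] H := 1 - adjoint (F + K) * (F + K)
       P * P = P ∧ IsSelfAdjoint P ∧ FiniteDimensional ℂ (LinearMap.range (P : H →ₗ[ℂ] H))) :=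
  exists_compact_perturbation_isometry_general F hF
end

section
/- Let Y, Z be compact Hausdorff spaces, f : Z → Y continuous, and ξ, ζ Hermitian vector bundles over Y, Z. There is a bijection between the set of maps Δ : Γ(ξ) → Γ(ζ) satisfying ⟨Δ(s), Δ(s')⟩ = ⟨s, s'⟩ ∘ f for all sections s, s', and the set of continuous fiberwise isometric bundle maps f*(ξ) → ζ over Z. -/
open scoped InnerProductSpace

/-- A Hermitian vector bundle over `Y`, presented (Serre–Swan style) as the image of a
continuous family of orthogonal projections `P : Y → Mₘ(ℂ)`. -/
def IsProjField {Y : Type*} [TopologicalSpace Y] {m : ℕ}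
    (P : Y → Matrix (Fin m) (Fin m) ℂ) : Prop :=
  Continuous P ∧ ∀ y, P y * P y = P y ∧ star (P y) = P y

/-- The Hilbert `C(Y)`-module of continuous sections of the bundle determined by `P`. -/
def Sections {Y : Type*} [TopologicalSpace Y] {m : ℕ}
    (P : Y → Matrix (Fin m) (Fin m) ℂ) : Type _ :=
  {s : Y → EuclideanSpace ℂ (Fin m) //
    Continuous s ∧ ∀ y, Matrix.toEuclideanLin (P y) (s y) = s y}

/-- `D` is a continuous fiberwise isometric bundle map `f*(ξ_P) → ζ_Q` over `Z`. -/
def IsFiberwiseIsometry {Y Z : Type*} [TopologicalSpace Y] [TopologicalSpace Z]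
    (f : Z → Y) {m n : ℕ} (P : Y → Matrix (Fin m) (Fin m) ℂ)
    (Q : Z → Matrix (Fin n) (Fin n) ℂ) (D : Z → Matrix (Fin n) (Fin m) ℂ) : Prop :=
  Continuous D ∧ (∀ z, Q z * D z * P (f z) = D z) ∧
    ∀ (z : Z) (v v' : EuclideanSpace ℂ (Fin m)),
      Matrix.toEuclideanLin (P (f z)) v = v → Matrix.toEuclideanLin (P (f z)) v' = v' →
      ⟪Matrix.toEuclideanLin (D z) v, Matrix.toEuclideanLin (D z) v'⟫_ℂ = ⟪v, v'⟫_ℂ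

/-- `Δ : Γ(ξ_P) → Γ(ζ_Q)` is a Hilbert C*-module morphism over `α ↦ α ∘ f`. -/
def IsModuleMorphism {Y Z : Type*} [TopologicalSpace Y] [TopologicalSpace Z]
    (f : Z → Y) {m n : ℕ} (P : Y → Matrix (Fin m) (Fin m) ℂ)
    (Q : Z → Matrix (Fin n) (Fin n) ℂ) (Δ : Sections P → Sections Q) : Prop :=
  ∀ (s s' : Sections P) (z : Z),
    ⟪(Δ s).1 z, (Δ s').1 z⟫_ℂ = ⟪s.1 (f z), s'.1 (f z)⟫_ℂ

/-!
A family with the same Gram matrix as another satisfies the same linear relations, since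
`‖∑ cᵢ vᵢ‖²` only depends on the Gram matrix. A module morphism `Δ` preserves, at each `z`,
the Gram matrix of the values `s (f z)`, so `Δ s z` depends linearly on `s (f z)`. Every vector
`P (f z) w` of the fiber is the value of the section `y ↦ P y w`; the columns `Δ (y ↦ P y eⱼ) z`
therefore assemble into the unique matrix `D z` with `Δ s z = D z (s (f z))`, and it is a
fiberwise isometry. Conversely, a fiberwise isometry `D` defines `Δ s = D (s ∘ f)`.
-/

theorem eq_sum_smul_of_inner_eq {𝕜 E E' : Type*} [RCLike 𝕜] [NormedAddCommGroup E]
    [InnerProductSpace 𝕜 E] [NormedAddCommGroup E'] [InnerProductSpace 𝕜 E'] {ι : Type*} [Fintype ι]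
    {a : E} {b : ι → E} {a' : E'} {b' : ι → E'} (c : ι → 𝕜)
    (haa : ⟪a', a'⟫_𝕜 = ⟪a, a⟫_𝕜) (hab : ∀ j, ⟪a', b' j⟫_𝕜 = ⟪a, b j⟫_𝕜)
    (hba : ∀ j, ⟪b' j, a'⟫_𝕜 = ⟪b j, a⟫_𝕜) (hbb : ∀ j k, ⟪b' j, b' k⟫_𝕜 = ⟪b j, b k⟫_𝕜)
    (h : a = ∑ j, c j • b j) : a' = ∑ j, c j • b' j := by
  have hgram : ⟪a' - ∑ j, c j • b' j, a' - ∑ j, c j • b' j⟫_𝕜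
      = ⟪a - ∑ j, c j • b j, a - ∑ j, c j • b j⟫_𝕜 := by
    simp only [inner_sub_sub_self, inner_sum, sum_inner, inner_smul_right, inner_smul_left,
      haa, hab, hba, hbb]
  rwa [← h, sub_self, inner_zero_left, inner_self_eq_zero, sub_eq_zero] at hgram

namespace Matrix

theorem toEuclideanLin_mul_apply {𝕜 l m n : Type*} [RCLike 𝕜] [Fintype m] [DecidableEq m]
    [Fintype n] [DecidableEq n] (A : Matrix l m 𝕜) (B : Matrix m n 𝕜) (v : EuclideanSpace 𝕜 n) :
    toEuclideanLin (A * B) v = toEuclideanLin A (toEuclideanLin B v) := by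
  rw [toLpLin_mul_same, LinearMap.comp_apply]

end Matrix

theorem Continuous.toEuclideanLin_apply {𝕜 X m n : Type*} [RCLike 𝕜] [TopologicalSpace X]
    [Fintype n] [DecidableEq n] {M : X → Matrix m n 𝕜} {v : X → EuclideanSpace 𝕜 n}
    (hM : Continuous M) (hv : Continuous v) :
    Continuous fun x => Matrix.toEuclideanLin (M x) (v x) :=
  (PiLp.continuous_toLp 2 _).comp (hM.matrix_mulVec ((PiLp.continuous_ofLp 2 _).comp hv))

theorem EuclideanSpace.eq_sum_smul_single {𝕜 n : Type*} [RCLike 𝕜] [Fintype n] [DecidableEq n]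
    (w : EuclideanSpace 𝕜 n) : w = ∑ j, w j • EuclideanSpace.single j (1 : 𝕜) := by
  simpa only [EuclideanSpace.basisFun_apply, EuclideanSpace.basisFun_repr] using
    ((EuclideanSpace.basisFun n 𝕜).sum_repr w).symm

section ProjSection

variable {Y : Type*} [TopologicalSpace Y] {m : ℕ} {P : Y → Matrix (Fin m) (Fin m) ℂ}

noncomputable def projSection (hP : IsProjField P) (v : EuclideanSpace ℂ (Fin m)) : Sections P :=
  ⟨fun y => Matrix.toEuclideanLin (P y) v, hP.1.toEuclideanLin_apply continuous_const,
    fun y => by rw [← Matrix.toEuclideanLin_mul_apply, (hP.2 y).1]⟩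

theorem projSection_apply_eq_sum (hP : IsProjField P) (v : EuclideanSpace ℂ (Fin m)) (y : Y) :
    (projSection hP v).1 y = ∑ j, v j • (projSection hP (EuclideanSpace.single j 1)).1 y := by
  conv_lhs => rw [projSection, v.eq_sum_smul_single]
  simp only [map_sum, map_smul]
  rfl

end ProjSection

section ModuleMorphism

variable {Y Z : Type*} [TopologicalSpace Y] [TopologicalSpace Z] {f : Z → Y} {m n : ℕ}
  {P : Y → Matrix (Fin m) (Fin m) ℂ} {Q : Z → Matrix (Fin n) (Fin n) ℂ}
  {Δ : Sections P → Sections Q}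

theorem IsModuleMorphism.apply_eq_sum_smul (hΔ : IsModuleMorphism f P Q Δ) {ι : Type*}
    [Fintype ι] {s : Sections P} {t : ι → Sections P} (c : ι → ℂ) {z : Z}
    (h : s.1 (f z) = ∑ j, c j • (t j).1 (f z)) : (Δ s).1 z = ∑ j, c j • (Δ (t j)).1 z :=
  eq_sum_smul_of_inner_eq c (hΔ _ _ z) (fun _ => hΔ _ _ z) (fun _ => hΔ _ _ z)
    (fun _ _ => hΔ _ _ z) h

variable (Δ) in
noncomputable def fiberMatrix (hP : IsProjField P) (z : Z) : Matrix (Fin n) (Fin m) ℂ :=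
  Matrix.of fun i j => (Δ (projSection hP (EuclideanSpace.single j 1))).1 z i

theorem toEuclideanLin_fiberMatrix (hP : IsProjField P) (z : Z) (w : EuclideanSpace ℂ (Fin m)) :
    Matrix.toEuclideanLin (fiberMatrix Δ hP z) w
      = ∑ j, w j • (Δ (projSection hP (EuclideanSpace.single j 1))).1 z := by
  conv_lhs => rw [w.eq_sum_smul_single, map_sum]
  refine Finset.sum_congr rfl fun j _ => ?_
  rw [map_smul]
  congr 1
  ext i
  simp [fiberMatrix, Matrix.toLpLin_apply]

theorem IsModuleMorphism.apply_projSection (hΔ : IsModuleMorphism f P Q Δ) (hP : IsProjField P)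
    (z : Z) (w : EuclideanSpace ℂ (Fin m)) :
    (Δ (projSection hP w)).1 z = Matrix.toEuclideanLin (fiberMatrix Δ hP z) w := by
  rw [toEuclideanLin_fiberMatrix]
  exact hΔ.apply_eq_sum_smul _ (projSection_apply_eq_sum hP w (f z))

theorem IsModuleMorphism.apply_eq_fiberMatrix (hΔ : IsModuleMorphism f P Q Δ)
    (hP : IsProjField P) (s : Sections P) (z : Z) :
    (Δ s).1 z = Matrix.toEuclideanLin (fiberMatrix Δ hP z) (s.1 (f z)) := by
  rw [toEuclideanLin_fiberMatrix]
  refine hΔ.apply_eq_sum_smul _ ?_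
  conv_lhs => rw [← s.2.2 (f z)]
  exact projSection_apply_eq_sum hP (s.1 (f z)) (f z)

theorem IsModuleMorphism.isFiberwiseIsometry_fiberMatrix (hΔ : IsModuleMorphism f P Q Δ)
    (hP : IsProjField P) : IsFiberwiseIsometry f P Q (fiberMatrix Δ hP) := by
  refine ⟨?_, fun z => ?_, fun z v v' hv hv' => ?_⟩
  · exact continuous_matrix fun i j => (continuous_apply i).comp
      ((PiLp.continuous_ofLp 2 _).comp (Δ (projSection hP (EuclideanSpace.single j 1))).2.1)
  · refine Matrix.toEuclideanLin.injective (LinearMap.ext fun w => ?_)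
    have hPw : Matrix.toEuclideanLin (fiberMatrix Δ hP z) (Matrix.toEuclideanLin (P (f z)) w)
        = (Δ (projSection hP w)).1 z := (hΔ.apply_eq_fiberMatrix hP (projSection hP w) z).symm
    rw [Matrix.toEuclideanLin_mul_apply, Matrix.toEuclideanLin_mul_apply, hPw, (Δ _).2.2,
      hΔ.apply_projSection]
  · rw [← hΔ.apply_projSection, ← hΔ.apply_projSection, hΔ]
    exact congrArg₂ (⟪·, ·⟫_ℂ) hv hv'

end ModuleMorphism

section FiberwiseIsometry

variable {Y Z : Type*} [TopologicalSpace Y] [TopologicalSpace Z] {f : Z → Y} {m n : ℕ}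
  {P : Y → Matrix (Fin m) (Fin m) ℂ} {Q : Z → Matrix (Fin n) (Fin n) ℂ}
  {D : Z → Matrix (Fin n) (Fin m) ℂ}

noncomputable def IsFiberwiseIsometry.sectionMap (hD : IsFiberwiseIsometry f P Q D)
    (hf : Continuous f) (s : Sections P) : Sections Q :=
  ⟨fun z => Matrix.toEuclideanLin (D z) (s.1 (f z)), hD.1.toEuclideanLin_apply (s.2.1.comp hf),
    fun z => by
      change Matrix.toEuclideanLin (Q z) (Matrix.toEuclideanLin (D z) (s.1 (f z)))
        = Matrix.toEuclideanLin (D z) (s.1 (f z))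
      conv_rhs => rw [← hD.2.1 z]
      rw [Matrix.toEuclideanLin_mul_apply, Matrix.toEuclideanLin_mul_apply, s.2.2]⟩

theorem IsFiberwiseIsometry.isModuleMorphism_sectionMap (hD : IsFiberwiseIsometry f P Q D)
    (hf : Continuous f) : IsModuleMorphism f P Q (hD.sectionMap hf) :=
  fun s s' z => hD.2.2 z _ _ (s.2.2 (f z)) (s'.2.2 (f z))

theorem IsFiberwiseIsometry.mul_proj (hD : IsFiberwiseIsometry f P Q D) (hP : IsProjField P)
    (z : Z) : D z * P (f z) = D z := by
  conv_lhs => rw [← hD.2.1 z, Matrix.mul_assoc, (hP.2 (f z)).1, hD.2.1 z]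

theorem IsFiberwiseIsometry.eq_of_apply_sections_eq {D' : Z → Matrix (Fin n) (Fin m) ℂ}
    (hD : IsFiberwiseIsometry f P Q D) (hD' : IsFiberwiseIsometry f P Q D') (hP : IsProjField P)
    (h : ∀ (s : Sections P) (z : Z),
      Matrix.toEuclideanLin (D z) (s.1 (f z)) = Matrix.toEuclideanLin (D' z) (s.1 (f z))) :
    D = D' := by
  funext z
  rw [← hD.mul_proj hP, ← hD'.mul_proj hP]
  refine Matrix.toEuclideanLin.injective (LinearMap.ext fun w => ?_)
  rw [Matrix.toEuclideanLin_mul_apply, Matrix.toEuclideanLin_mul_apply]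
  exact h (projSection hP w) z

end FiberwiseIsometry

theorem moduleMorphism_bijects_with_fiberwiseIsometry_general
    {Y Z : Type*} [TopologicalSpace Y]
    [TopologicalSpace Z]
    (f : Z → Y) (hf : Continuous f) {m n : ℕ}
    (P : Y → Matrix (Fin m) (Fin m) ℂ) (hP : IsProjField P)
    (Q : Z → Matrix (Fin n) (Fin n) ℂ) :
    (∀ D : Z → Matrix (Fin n) (Fin m) ℂ, IsFiberwiseIsometry f P Q D →
      ∃! Δ : Sections P → Sections Q, IsModuleMorphism f P Q Δ ∧
        ∀ (s : Sections P) (z : Z),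
          (Δ s).1 z = Matrix.toEuclideanLin (D z) (s.1 (f z))) ∧
    (∀ Δ : Sections P → Sections Q, IsModuleMorphism f P Q Δ →
      ∃! D : Z → Matrix (Fin n) (Fin m) ℂ, IsFiberwiseIsometry f P Q D ∧
        ∀ (s : Sections P) (z : Z),
          (Δ s).1 z = Matrix.toEuclideanLin (D z) (s.1 (f z))) := by
  refine ⟨fun D hD => ⟨hD.sectionMap hf, ⟨hD.isModuleMorphism_sectionMap hf, fun _ _ => rfl⟩,
    fun Δ ⟨_, hΔD⟩ => funext fun s => Subtype.ext (funext (hΔD s))⟩, fun Δ hΔ => ?_⟩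
  refine ⟨fiberMatrix Δ hP, ⟨hΔ.isFiberwiseIsometry_fiberMatrix hP, hΔ.apply_eq_fiberMatrix hP⟩,
    fun D ⟨hD, hΔD⟩ => ?_⟩
  exact hD.eq_of_apply_sections_eq (hΔ.isFiberwiseIsometry_fiberMatrix hP) hP
    fun s z => (hΔD s z).symm.trans (hΔ.apply_eq_fiberMatrix hP s z)

/-- Hilbert C*-module morphisms `Γ(ξ) → Γ(ζ)` over `α ↦ α ∘ f` are in one-to-one
correspondence with continuous fiberwise isometric bundle maps `f*(ξ) → ζ`: the relation
`Δ(s)(z) = D(z)(s(f z))` is the graph of a bijection between the two sets. -/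
theorem moduleMorphism_bijects_with_fiberwiseIsometry
    {Y Z : Type*} [TopologicalSpace Y] [CompactSpace Y] [T2Space Y]
    [TopologicalSpace Z] [CompactSpace Z] [T2Space Z]
    (f : Z → Y) (hf : Continuous f) {m n : ℕ}
    (P : Y → Matrix (Fin m) (Fin m) ℂ) (hP : IsProjField P)
    (Q : Z → Matrix (Fin n) (Fin n) ℂ) (hQ : IsProjField Q) :
    (∀ D : Z → Matrix (Fin n) (Fin m) ℂ, IsFiberwiseIsometry f P Q D →
      ∃! Δ : Sections P → Sections Q, IsModuleMorphism f P Q Δ ∧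
        ∀ (s : Sections P) (z : Z),
          (Δ s).1 z = Matrix.toEuclideanLin (D z) (s.1 (f z))) ∧
    (∀ Δ : Sections P → Sections Q, IsModuleMorphism f P Q Δ →
      ∃! D : Z → Matrix (Fin n) (Fin m) ℂ, IsFiberwiseIsometry f P Q D ∧
        ∀ (s : Sections P) (z : Z),
          (Δ s).1 z = Matrix.toEuclideanLin (D z) (s.1 (f z))) :=
  moduleMorphism_bijects_with_fiberwiseIsometry_general f hf P hP Q
end

section
/- Let U be the open unit disc in ℂ and let ω_k, ω_l : S¹ → S¹ be continuous maps of winding numbers k ≠ l. Then the composites of ω_k and ω_l with the canonical map βU∖U → S¹ (dual to the inclusion C(S¹) → C_b(U)/C₀(U)) are not homotopic as maps βU∖U → S¹; equivalently, the group homomorphism ℤ ≅ [S¹, S¹] → [βU∖U, S¹] induced by this map is injective. -/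
/-!
A homotopy from `c ^ k` to `c ^ l`, where `c : βU∖U → S¹` is the canonical map, lifts through the
covering `ℝ → S¹`, so `c ^ (l - k) = exp (i L)` for a continuous real `L` on the corona; by Tietze,
`L` extends to a continuous `G` on `βU`. Since `βU` is compact and `‖e‖ = 1` exactly on the corona,
`exp (i G)` is nowhere antipodal to `(z / r) ^ (l - k)` on some circle `‖z‖ = r < 1` in `U`. There
the quotient of the two has a continuous argument, so `z ↦ z ^ (l - k)` has a continuous real
logarithm on the unit circle, which forces `l = k`.
-/

/-- The corona `βU ∖ U` of the open unit disc `U`. -/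
abbrev DiscCorona : Type :=
  {x : StoneCech {z : ℂ // ‖z‖ < 1} // x ∉ Set.range stoneCechUnit}

/-- An element of the circle group from a complex number of norm one. -/
def mkCircle (z : ℂ) (h : ‖z‖ = 1) : Circle :=
  ⟨z, mem_sphere_zero_iff_norm.2 h⟩

lemma continuous_mkCircle {X : Type*} [TopologicalSpace X] {g : X → ℂ}
    (hg : Continuous g) (h : ∀ x, ‖g x‖ = 1) :
    Continuous fun x => mkCircle (g x) (h x) :=
  Continuous.subtype_mk hg _

open Set Topology

namespace Circle

lemma coe_mem_slitPlane {u : Circle} (hu : u ≠ -1) : (u : ℂ) ∈ Complex.slitPlane := by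
  refine Complex.mem_slitPlane_iff_arg.2 ⟨fun h => hu ?_, u.coe_ne_zero⟩
  rw [← exp_arg u, h]
  ext
  simp [coe_exp, Complex.exp_pi_mul_I]

theorem exists_exp_eq_div_of_ne_neg {X : Type*} [TopologicalSpace X] {v w : C(X, Circle)}
    (h : ∀ x, w x ≠ -v x) : ∃ A : C(X, ℝ), ∀ x, exp (A x) = w x / v x := by
  have hne : ∀ x, w x / v x ≠ -1 := fun x hx => h x (by rw [← neg_one_mul, ← hx, div_mul_cancel])
  refine ⟨⟨fun x => Complex.arg (w x / v x : Circle), continuous_iff_continuousAt.2 fun x => ?_⟩,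
    fun x => exp_arg _⟩
  exact ContinuousAt.comp (f := fun x => ((w x / v x : Circle) : ℂ))
    (Complex.continuousAt_arg (coe_mem_slitPlane (hne x)))
    (continuous_subtype_val.comp (w.continuous.div' v.continuous)).continuousAt

theorem eq_zero_of_exp_comp_eq_zpow {Θ : Circle → ℝ} (hΘ : Continuous Θ) {m : ℤ}
    (h : ∀ u, exp (Θ u) = u ^ m) : m = 0 := by
  have hlift : ∀ t, exp (Θ (exp t) - m * t) = 1 := fun t => by
    rw [exp_sub, h, exp_intCast_mul, div_self']
  have hconst := isCoveringMap_exp.const_of_comp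
    (by fun_prop : Continuous fun t => Θ (exp t) - m * t) (fun t t' => by rw [hlift, hlift])
    (2 * Real.pi) 0
  rw [exp_two_pi, ← exp_zero] at hconst
  simpa [Real.pi_ne_zero] using hconst

end Circle

theorem ContinuousMap.Homotopic.exists_circleExp_eq_div {X : Type*} [TopologicalSpace X]
    {f g : C(X, Circle)} (h : f.Homotopic g) :
    ∃ L : C(X, ℝ), ∀ x, Circle.exp (L x) = g x / f x := by
  obtain ⟨H⟩ := h
  let H' : C(unitInterval × X, Circle) :=
    ⟨fun p => H p / f p.2, H.continuous.div' (f.continuous.comp continuous_snd)⟩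
  have H'_zero : ∀ x, H' (0, x) = Circle.exp (ContinuousMap.const X 0 x) := fun x => by
    simp [H']
  let Λ := Circle.isCoveringMap_exp.liftHomotopy H' _ H'_zero
  refine ⟨Λ.comp ((ContinuousMap.const X 1).prodMk (ContinuousMap.id X)), fun x => ?_⟩
  exact (congr_fun (Circle.isCoveringMap_exp.liftHomotopy_lifts H' _ H'_zero) (1, x)).trans
    (by simp [H'])

theorem eventually_preimage_singleton_subset {X Y : Type*} [TopologicalSpace X] [CompactSpace X]
    [TopologicalSpace Y] [T2Space Y] {φ : X → Y} (hφ : Continuous φ) {V : Set X} (hV : IsOpen V)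
    {a : Y} (ha : φ ⁻¹' {a} ⊆ V) : ∀ᶠ b in 𝓝 a, φ ⁻¹' {b} ⊆ V := by
  have hclosed : IsClosed (φ '' Vᶜ) :=
    (hV.isClosed_compl.isCompact.image hφ).isClosed
  filter_upwards [hclosed.isOpen_compl.mem_nhds fun ⟨x, hx, hxa⟩ => hx (ha hxa)] with b hb x hx
  by_contra hxV
  exact hb ⟨x, hxV, hx⟩

@[simp]
lemma coe_mkCircle (z : ℂ) (h : ‖z‖ = 1) : (mkCircle z h : ℂ) = z := rfl

local notation "𝔻" => {z : ℂ // ‖z‖ < 1}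

theorem isOpen_range_stoneCechUnit_disc {e : StoneCech 𝔻 → ℂ} (he_cont : Continuous e)
    (he_unit : ∀ u : 𝔻, e (stoneCechUnit u) = u.1)
    (he_corona : ∀ x, x ∉ range stoneCechUnit → ‖e x‖ = 1) :
    IsOpen (range (stoneCechUnit : 𝔻 → StoneCech 𝔻)) := by
  have : range (stoneCechUnit : 𝔻 → StoneCech 𝔻) = e ⁻¹' Metric.ball 0 1 := by
    ext x
    refine ⟨?_, fun hx => by_contra fun hx' => ?_⟩
    · rintro ⟨u, rfl⟩
      simpa [he_unit] using u.2
    · simp [he_corona x hx'] at hx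
  exact this ▸ Metric.isOpen_ball.preimage he_cont

theorem eq_zero_of_circleExp_eq_pow_off_range {e : StoneCech 𝔻 → ℂ}
    (he_cont : Continuous e) (he_unit : ∀ u : 𝔻, e (stoneCechUnit u) = u.1)
    {G : StoneCech 𝔻 → ℝ} (hG : Continuous G) {m : ℕ}
    (hGm : ∀ x ∉ range stoneCechUnit, (Circle.exp (G x) : ℂ) = e x ^ m) : m = 0 := by
  -- `P x = 0` iff `e x = 0` or `exp (i G x)` is antipodal to `(e x / ‖e x‖) ^ m`.
  let P : StoneCech 𝔻 → ℂ := fun x => Circle.exp (G x) * (‖e x‖ : ℂ) ^ m + e x ^ m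
  have hP : Continuous P := by fun_prop
  have hP_one : (fun x => ‖e x‖) ⁻¹' {1} ⊆ {x | P x ≠ 0} := by
    intro x (hx : ‖e x‖ = 1)
    have hx_corona : x ∉ range stoneCechUnit := by
      rintro ⟨u, rfl⟩
      exact (he_unit u ▸ hx).not_lt u.2
    have hex : e x ≠ 0 := norm_ne_zero_iff.1 (by simp [hx])
    simp only [mem_ofPred_eq, P, hGm x hx_corona, hx]
    rw [Complex.ofReal_one, one_pow, mul_one, ← two_mul]
    exact mul_ne_zero two_ne_zero (pow_ne_zero _ hex)
  obtain ⟨r, hr, ⟨hr0, hr1⟩⟩ : ∃ r, (fun x => ‖e x‖) ⁻¹' {r} ⊆ {x | P x ≠ 0} ∧ r ∈ Ioo 0 1 :=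
    (((eventually_preimage_singleton_subset (by fun_prop) (isOpen_ne_fun hP continuous_const)
      hP_one).filter_mono nhdsWithin_le_nhds).and (Ioo_mem_nhdsLT zero_lt_one)).exists
  have hz : ∀ u : Circle, ‖(r : ℂ) * u‖ = r := fun u => by simp [abs_of_pos hr0, Circle.norm_coe]
  let z : Circle → StoneCech 𝔻 := fun u => stoneCechUnit ⟨r * u, (hz u).trans_lt hr1⟩
  have hz_cont : Continuous z := continuous_stoneCechUnit.comp (by fun_prop)
  have he_z : ∀ u, e (z u) = r * u := fun u => he_unit _
  let w : C(Circle, Circle) := ⟨fun u => Circle.exp (G (z u)), by fun_prop⟩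
  let v : C(Circle, Circle) := ⟨fun u => u ^ (m : ℤ), by fun_prop⟩
  have hwv : ∀ u, w u ≠ -v u := fun u hu => by
    apply hr (a := z u) (show ‖e (z u)‖ = r by rw [he_z, hz u])
    simp only [P, he_z, hz u]
    have := congr_arg ((↑) : Circle → ℂ) hu
    simp only [w, v, ContinuousMap.coe_mk, Circle.coe_neg, zpow_natCast,
      Circle.coe_pow] at this
    rw [this]
    ring
  obtain ⟨A, hA⟩ := Circle.exists_exp_eq_div_of_ne_neg hwv
  have := Circle.eq_zero_of_exp_comp_eq_zpow (Θ := fun u => G (z u) - A u) (by fun_prop)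
    (m := m) fun u => by rw [Circle.exp_sub, hA]; exact div_div_cancel _ _
  exact_mod_cast this

theorem eq_zero_of_circleExp_eq_zpow_off_range {e : StoneCech 𝔻 → ℂ}
    (he_cont : Continuous e) (he_unit : ∀ u : 𝔻, e (stoneCechUnit u) = u.1)
    {G : StoneCech 𝔻 → ℝ} (hG : Continuous G) {m : ℤ}
    (hGm : ∀ x ∉ range stoneCechUnit, (Circle.exp (G x) : ℂ) = e x ^ m) : m = 0 := by
  obtain ⟨n, rfl | rfl⟩ := Int.eq_nat_or_neg m
  · exact_mod_cast eq_zero_of_circleExp_eq_pow_off_range he_cont he_unit hG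
      fun x hx => by rw [hGm x hx, zpow_natCast]
  · have := eq_zero_of_circleExp_eq_pow_off_range he_cont he_unit (G := fun x => -G x) hG.neg
      fun x hx => by
        rw [Circle.exp_neg, Circle.coe_inv, hGm x hx, zpow_neg, inv_inv, zpow_natCast]
    simp [this]

/-- The canonical map `βU∖U → S¹` (Gelfand dual of `C(S¹) → C_b(U)/C₀(U)`) is the
restriction to the corona of the Stone–Čech extension `e` of the inclusion `U ↪ ℂ`;
it takes values on the unit circle. The homomorphism
`ℤ ≅ [S¹,S¹] → [βU∖U, S¹]` it induces is injective: if the composites of `z ↦ z^k` and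
`z ↦ z^l` with this canonical map are homotopic, then `k = l`. -/
theorem corona_circle_classes_injective
    (e : StoneCech {z : ℂ // ‖z‖ < 1} → ℂ)
    (he_cont : Continuous e)
    (he_unit : ∀ u : {z : ℂ // ‖z‖ < 1}, e (stoneCechUnit u) = u.1)
    (he_corona : ∀ x : StoneCech {z : ℂ // ‖z‖ < 1},
      x ∉ Set.range stoneCechUnit → ‖e x‖ = 1)
    (k l : ℤ)
    (h : ContinuousMap.Homotopic
      (⟨fun x : DiscCorona => (mkCircle (e x.1) (he_corona x.1 x.2)) ^ k,
        (continuous_zpow k).comp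
          (continuous_mkCircle (he_cont.comp continuous_subtype_val) _)⟩)
      (⟨fun x : DiscCorona => (mkCircle (e x.1) (he_corona x.1 x.2)) ^ l,
        (continuous_zpow l).comp
          (continuous_mkCircle (he_cont.comp continuous_subtype_val) _)⟩)) :
    k = l := by
  obtain ⟨L, hL⟩ := h.exists_circleExp_eq_div
  obtain ⟨G, hG⟩ := ContinuousMap.exists_restrict_eq
    (isOpen_range_stoneCechUnit_disc he_cont he_unit he_corona).isClosed_compl L
  refine (sub_eq_zero.1 (eq_zero_of_circleExp_eq_zpow_off_range he_cont he_unit G.continuous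
    fun x hx => ?_)).symm
  have hGx : G x = L ⟨x, hx⟩ := DFunLike.congr_fun hG ⟨x, hx⟩
  have hex : e x ≠ 0 := norm_ne_zero_iff.1 (by simp [he_corona x hx])
  simpa [hGx, zpow_sub₀ hex] using congr_arg ((↑) : Circle → ℂ) (hL ⟨x, hx⟩)
end
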